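/- Vanishing of the weighted gradient at the degenerate point: if u ∈ H²_{1/σ}(0,1) (i.e., u ∈ H¹_{1/σ} with Au = σ(ηu')' ∈ L²_{1/σ}) and K₁ ≤ 1, then lim_{x→0⁺} x (u'(x))² = 0. -/

import Mathlib

/-!
Put `z(x) = x η(x) u'(x)²`. From `(η u')' = w` and `η' = η b / a`,
`z' = η u'² + 2 x u' w - x (b / a) η u'²`. Near `0` the weight `η` is bounded above and below,
and the monotonicity of `x ^ K₁ / a` together with `K₁ ≤ 1` bounds `x / a`; hence each term of
`z'` is dominated by `u'²` or by `σ w² = (Au)² / σ`, so `z'` is integrable and `z` has a limit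
at `0⁺`. That limit vanishes because `z(x) / x ≤ C u'(x)²` is integrable while `1 / x` is not.
-/

open Set MeasureTheory Filter Topology

theorem exists_tendsto_nhdsGT_of_hasDerivAt_of_integrableOn {F : Type*} [NormedAddCommGroup F]
    [NormedSpace ℝ F] [CompleteSpace F] {z z' : ℝ → F} {p q : ℝ}
    (hpq : p < q) (hz : ∀ x ∈ Ioo p q, HasDerivAt z (z' x) x)
    (hz' : IntegrableOn z' (Ioo p q)) :
    ∃ L, Tendsto z (𝓝[>] p) (𝓝 L) := by
  obtain ⟨m, hpm, hmq⟩ := exists_between hpq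
  have hint : IntegrableOn z' (uIcc p m) := by
    rw [uIcc_of_le hpm.le, integrableOn_Icc_iff_integrableOn_Ioo]
    exact hz'.mono_set (Ioo_subset_Ioo_right hmq.le)
  have hprim : Tendsto (fun x => ∫ t in x..m, z' t) (𝓝[>] p) (𝓝 (∫ t in p..m, z' t)) := by
    rw [← nhdsWithin_Ioo_eq_nhdsGT hpm]
    refine ((intervalIntegral.continuousOn_primitive_interval_left hint) p
      left_mem_uIcc).tendsto.mono_left (nhdsWithin_mono _ ?_)
    rw [uIcc_of_le hpm.le]
    exact Ioo_subset_Icc_self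
  refine ⟨z m - ∫ t in p..m, z' t, (tendsto_const_nhds.sub hprim).congr' ?_⟩
  filter_upwards [Ioo_mem_nhdsGT hpm] with x hx
  have hsub : uIcc x m ⊆ Ioo p q := by
    rw [uIcc_of_le hx.2.le]
    exact Icc_subset_Ioo hx.1 hmq
  rw [intervalIntegral.integral_eq_sub_of_hasDerivAt (fun t ht => hz t (hsub ht))
    ((hint.mono_set (uIcc_subset_uIcc_right (by
      rw [uIcc_of_le hpm.le]; exact Ioo_subset_Icc_self hx))).intervalIntegrable)]
  abel

theorem nonpos_of_tendsto_nhdsGT_zero_of_le_mul {z g : ℝ → ℝ} {c L : ℝ} (hc : 0 < c)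
    (hz : Tendsto z (𝓝[>] 0) (𝓝 L)) (hg : IntegrableOn g (Ioo 0 c))
    (hzg : ∀ x ∈ Ioo 0 c, z x ≤ x * g x) : L ≤ 0 := by
  by_contra! hL
  obtain ⟨ε, hε, hεz⟩ := mem_nhdsGT_iff_exists_Ioo_subset.1
    (hz.eventually (eventually_gt_nhds (half_lt_self hL)))
  set ε' := min ε c
  have hε' : 0 < ε' := lt_min hε hc
  -- near `0`, `L / 2 < z x ≤ x g(x)` dominates `x⁻¹` by a multiple of `g`
  have hinv : IntegrableOn (fun x : ℝ => x⁻¹) (Ioo 0 ε') := by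
    refine ((hg.mono_set (Ioo_subset_Ioo_right (min_le_right _ _))).const_mul (2 / L)).mono'
      ((continuousOn_inv₀.mono fun x hx => hx.1.ne').aestronglyMeasurable measurableSet_Ioo)
      (ae_restrict_of_forall_mem measurableSet_Ioo fun x hx => ?_)
    have hx_half : L / 2 < z x := hεz ⟨hx.1, hx.2.trans_le (min_le_left _ _)⟩
    have hxg := hzg x ⟨hx.1, hx.2.trans_le (min_le_right _ _)⟩
    rw [Real.norm_eq_abs, abs_of_pos (inv_pos.2 hx.1), inv_le_iff_one_le_mul₀' hx.1]
    rw [show x * (2 / L * g x) = 2 * (x * g x) / L by ring, le_div_iff₀ hL]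
    linarith
  have hinv' := (intervalIntegrable_iff_integrableOn_Ioo_of_le hε'.le).2 hinv
  rw [intervalIntegrable_inv_iff, uIcc_of_le hε'.le] at hinv'
  exact hinv'.elim hε'.ne (fun h => h (left_mem_Icc.2 hε'.le))

theorem tendsto_nhdsGT_zero_of_hasDerivAt_of_le_mul {z z' g : ℝ → ℝ} {c : ℝ} (hc : 0 < c)
    (hz : ∀ x ∈ Ioo 0 c, HasDerivAt z (z' x) x) (hz' : IntegrableOn z' (Ioo 0 c))
    (hg : IntegrableOn g (Ioo 0 c)) (hz_nonneg : ∀ x ∈ Ioo 0 c, 0 ≤ z x)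
    (hzg : ∀ x ∈ Ioo 0 c, z x ≤ x * g x) : Tendsto z (𝓝[>] 0) (𝓝 0) := by
  obtain ⟨L, hL⟩ := exists_tendsto_nhdsGT_of_hasDerivAt_of_integrableOn hc hz hz'
  have hL_nonneg : 0 ≤ L := ge_of_tendsto hL <| by
    filter_upwards [Ioo_mem_nhdsGT hc] using hz_nonneg
  rwa [le_antisymm (nonpos_of_tendsto_nhdsGT_zero_of_le_mul hc hL hg hzg) hL_nonneg] at hL

theorem aestronglyMeasurable_of_forall_hasDerivAt {F : Type*} [NormedAddCommGroup F]
    [NormedSpace ℝ F] [CompleteSpace F] {f f' : ℝ → F} {s : Set ℝ}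
    (hs : MeasurableSet s) (hf : ∀ x ∈ s, HasDerivAt f (f' x) x) :
    AEStronglyMeasurable f' (volume.restrict s) :=
  (aestronglyMeasurable_deriv f _).congr
    (ae_restrict_of_forall_mem hs fun x hx => (hf x hx).deriv)

theorem abs_intervalIntegral_le_integral_abs {f : ℝ → ℝ} {p q t x : ℝ}
    (hf : IntegrableOn f (Ioo p q)) (ht : t ∈ Ioo p q) (hx : x ∈ Ioo p q) :
    |∫ s in t..x, f s| ≤ ∫ s in Ioo p q, |f s| := by
  have hsub : uIoc t x ⊆ Ioo p q := fun s hs =>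
    ⟨(lt_min ht.1 hx.1).trans hs.1, hs.2.trans_lt (max_lt ht.2 hx.2)⟩
  calc |∫ s in t..x, f s| ≤ ∫ s in uIoc t x, |f s| :=
        by simpa only [Real.norm_eq_abs] using
          intervalIntegral.norm_integral_le_integral_norm_uIoc (f := f) (μ := volume)
    _ ≤ ∫ s in Ioo p q, |f s| :=
        setIntegral_mono_set hf.abs (ae_of_all _ fun s => abs_nonneg _) hsub.eventuallyLE

theorem exists_bounds_exp_intervalIntegral {f : ℝ → ℝ} {p q t : ℝ}
    (hf : IntegrableOn f (Ioo p q)) (ht : t ∈ Ioo p q) :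
    ∃ E, ∀ x ∈ Ioo p q,
      Real.exp (∫ s in t..x, f s) ≤ E ∧ 1 ≤ E * Real.exp (∫ s in t..x, f s) := by
  refine ⟨Real.exp (∫ s in Ioo p q, |f s|), fun x hx => ?_⟩
  have h := abs_le.1 (abs_intervalIntegral_le_integral_abs hf ht hx)
  rw [← Real.exp_add, Real.one_le_exp_iff]
  exact ⟨Real.exp_le_exp.2 h.2, by linarith⟩

theorem hasDerivAt_intervalIntegral_of_continuousOn {f : ℝ → ℝ} {p q t x : ℝ}
    (hf : ContinuousOn f (Ioo p q)) (ht : t ∈ Ioo p q) (hx : x ∈ Ioo p q) :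
    HasDerivAt (fun y => ∫ s in t..y, f s) (f x) x :=
  intervalIntegral.integral_hasDerivAt_right
    (hf.mono fun _ hs => ⟨(lt_min ht.1 hx.1).trans_le hs.1,
      hs.2.trans_lt (max_lt ht.2 hx.2)⟩).intervalIntegrable
    (hf.stronglyMeasurableAtFilter isOpen_Ioo x hx) (hf.continuousAt (isOpen_Ioo.mem_nhds hx))

theorem div_le_of_rpow_div_le {K x a C : ℝ} (hK : K ≤ 1) (hx : 0 < x) (hx1 : x ≤ 1)
    (ha : 0 < a) (h : x ^ K / a ≤ C) : x / a ≤ C := by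
  refine le_trans (div_le_div_of_nonneg_right ?_ ha.le) h
  simpa using Real.rpow_le_rpow_of_exponent_ge hx hx1 hK

theorem hasDerivAt_mul_mul_sq {η v β w : ℝ → ℝ} {x : ℝ} (hη0 : ∀ t, η t ≠ 0)
    (hη : HasDerivAt η (η x * β x) x) (hv : HasDerivAt (fun t => η t * v t) (w x) x) :
    HasDerivAt (fun t => t * η t * v t ^ 2)
      (η x * v x ^ 2 + 2 * x * v x * w x - x * β x * (η x * v x ^ 2)) x := by
  have hfun : (fun t => t * η t * v t ^ 2) = fun t => t * (η t * v t) ^ 2 / η t := by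
    funext t
    rw [eq_div_iff (hη0 t)]
    ring
  rw [hfun]
  refine (((hasDerivAt_id' x).mul (hv.pow 2)).div hη (hη0 x)).congr_deriv ?_
  simp only [Pi.pow_apply, Pi.mul_apply]
  field_simp [hη0 x]
  ring

theorem abs_weighted_energy_deriv_le {x a b η v w B C E : ℝ} (hx : 0 < x) (hx1 : x ≤ 1)
    (ha : 0 < a) (hη : 0 < η) (hηE : η ≤ E) (hb : |b| ≤ B) (hxa : x / a ≤ C) :
    |η * v ^ 2 + 2 * x * v * w - x * (b / a) * (η * v ^ 2)|
      ≤ (E * (1 + B * C) + 1) * v ^ 2 + C * E * ((a / η * w) ^ 2 / (a / η)) := by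
  have hC : 0 ≤ C := (div_pos hx ha).le.trans hxa
  have hB : 0 ≤ B := (abs_nonneg b).trans hb
  have hweight : (a / η * w) ^ 2 / (a / η) = a * w ^ 2 / η := by
    field_simp
  have h1 : |η * v ^ 2| ≤ E * v ^ 2 := by
    rw [abs_of_nonneg (by positivity)]
    exact mul_le_mul_of_nonneg_right hηE (sq_nonneg _)
  have h2 : |2 * x * v * w| ≤ v ^ 2 + C * E * (a * w ^ 2 / η) := by
    have hxw : (x * w) ^ 2 ≤ C * E * (a * w ^ 2 / η) := calc
      (x * w) ^ 2 = x * (x / a) * (η * (a * w ^ 2 / η)) := by field_simp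
      _ ≤ 1 * C * (E * (a * w ^ 2 / η)) := by gcongr
      _ = C * E * (a * w ^ 2 / η) := by ring
    calc |2 * x * v * w| = 2 * |v| * |x * w| := by
          rw [abs_mul, abs_mul, abs_mul, abs_mul, abs_two]; ring
      _ ≤ |v| ^ 2 + |x * w| ^ 2 := two_mul_le_add_sq _ _
      _ ≤ v ^ 2 + C * E * (a * w ^ 2 / η) := by rw [sq_abs, sq_abs]; linarith
  have h3 : |x * (b / a) * (η * v ^ 2)| ≤ C * B * (E * v ^ 2) := calc
    |x * (b / a) * (η * v ^ 2)| = x / a * |b| * (η * v ^ 2) := by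
        rw [abs_mul, abs_mul, abs_div, abs_of_pos hx, abs_of_pos ha,
          abs_of_nonneg (by positivity : 0 ≤ η * v ^ 2)]
        ring
    _ ≤ C * B * (E * v ^ 2) := by gcongr
  rw [hweight]
  calc |η * v ^ 2 + 2 * x * v * w - x * (b / a) * (η * v ^ 2)|
      ≤ |η * v ^ 2| + |2 * x * v * w| + |x * (b / a) * (η * v ^ 2)| :=
        (abs_sub _ _).trans (add_le_add_left (abs_add_le _ _) _)
    _ ≤ _ := by nlinarith

theorem integrableOn_weighted_energy_deriv {a b η σ v w : ℝ → ℝ} {c B C E : ℝ}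
    (hc1 : c ≤ 1)
    (hmeas : AEStronglyMeasurable (fun x => η x * v x ^ 2 + 2 * x * v x * w x
      - x * (b x / a x) * (η x * v x ^ 2)) (volume.restrict (Ioo 0 c)))
    (hv : IntegrableOn (fun x => v x ^ 2) (Ioo 0 c))
    (hσw : IntegrableOn (fun x => (σ x * w x) ^ 2 / σ x) (Ioo 0 c))
    (ha : ∀ x ∈ Ioo 0 c, 0 < a x) (hη : ∀ x ∈ Ioo 0 c, 0 < η x ∧ η x ≤ E)
    (hσ : ∀ x ∈ Ioo 0 c, σ x = a x / η x) (hb : ∀ x ∈ Ioo 0 c, |b x| ≤ B)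
    (hxa : ∀ x ∈ Ioo 0 c, x / a x ≤ C) :
    IntegrableOn (fun x => η x * v x ^ 2 + 2 * x * v x * w x
      - x * (b x / a x) * (η x * v x ^ 2)) (Ioo 0 c) := by
  refine Integrable.mono' ((hv.const_mul (E * (1 + B * C) + 1)).add (hσw.const_mul (C * E))) hmeas
    (ae_restrict_of_forall_mem measurableSet_Ioo fun x hx => ?_)
  rw [Pi.add_apply, Real.norm_eq_abs, hσ x hx]
  exact abs_weighted_energy_deriv_le hx.1 (hx.2.le.trans hc1) (ha x hx) (hη x hx).1 (hη x hx).2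
    (hb x hx) (hxa x hx)

theorem statement18_general (a b : ℝ → ℝ) (K₁ : ℝ)
    (ha_cont : ContinuousOn a (Icc 0 1)) (hb_cont : ContinuousOn b (Icc 0 1))
    (ha_pos : ∀ x ∈ Ioc (0:ℝ) 1, 0 < a x)
    (hba : IntegrableOn (fun x => b x / a x) (Ioo 0 1))
    (hK₁1 : K₁ ≤ 1)
    (hmona : ∃ δ > 0, MonotoneOn (fun x : ℝ => x ^ K₁ / a x) (Ioo (0:ℝ) δ))
    (η σ : ℝ → ℝ)
    (hη : ∀ x, η x = Real.exp (∫ s in (1/2:ℝ)..x, b s / a s))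
    (hσ : ∀ x, σ x = a x / η x)
    -- `u ∈ H²_{1/σ}(0,1)`, with `(η u')' = w`, so `A u = σ w ∈ L²_{1/σ}`
    (u' w : ℝ → ℝ)
    (hu'L2 : IntegrableOn (fun x => u' x ^ 2) (Ioo 0 1))
    (hw : ∀ x ∈ Ioo (0:ℝ) 1, HasDerivAt (fun t => η t * u' t) (w x) x)
    (hAu : IntegrableOn (fun x => (σ x * w x) ^ 2 / σ x) (Ioo 0 1)) :
    Tendsto (fun x : ℝ => x * u' x ^ 2) (nhdsWithin 0 (Ioi 0)) (nhds 0) := by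
  obtain ⟨δ, hδ, hmon⟩ := hmona
  have ha : ∀ x ∈ Ioo (0:ℝ) 1, 0 < a x := fun x hx => ha_pos x (Ioo_subset_Ioc_self hx)
  have hη_pos : ∀ x, 0 < η x := fun x => hη x ▸ Real.exp_pos _
  obtain ⟨E, hηE⟩ : ∃ E, ∀ x ∈ Ioo (0:ℝ) 1, η x ≤ E ∧ 1 ≤ E * η x := by
    simpa only [← hη] using exists_bounds_exp_intervalIntegral hba
      (by norm_num : (1/2:ℝ) ∈ Ioo 0 1)
  have hηd : ∀ x ∈ Ioo (0:ℝ) 1, HasDerivAt η (η x * (b x / a x)) x := by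
    intro x hx
    rw [funext hη]
    exact (hasDerivAt_intervalIntegral_of_continuousOn ((hb_cont.mono Ioo_subset_Icc_self).div
      (ha_cont.mono Ioo_subset_Icc_self) fun y hy => (ha y hy).ne') (by norm_num) hx).exp
  obtain ⟨B, hB⟩ := isCompact_Icc.exists_bound_of_continuousOn hb_cont
  obtain ⟨c, hc0, hc⟩ := exists_between (lt_min hδ one_pos)
  obtain ⟨hcδ, hc1⟩ := lt_min_iff.1 hc
  have hcS : Ioo 0 c ⊆ Ioo 0 1 := Ioo_subset_Ioo_right hc1.le
  have hxa : ∀ x ∈ Ioo 0 c, x / a x ≤ c ^ K₁ / a c := fun x hx =>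
    div_le_of_rpow_div_le hK₁1 hx.1 (hx.2.trans hc1).le (ha x (hcS hx))
      (hmon ⟨hx.1, hx.2.trans hcδ⟩ ⟨hc0, hcδ⟩ hx.2.le)
  have hz := fun x (hx : x ∈ Ioo 0 c) => hasDerivAt_mul_mul_sq (β := fun t => b t / a t)
    (fun t => (hη_pos t).ne') (hηd x (hcS hx)) (hw x (hcS hx))
  have hz' := integrableOn_weighted_energy_deriv hc1.le
    (aestronglyMeasurable_of_forall_hasDerivAt measurableSet_Ioo hz) (hu'L2.mono_set hcS)
    (hAu.mono_set hcS) (fun x hx => ha x (hcS hx))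
    (fun x hx => ⟨hη_pos x, (hηE x (hcS hx)).1⟩) (fun x _ => hσ x)
    (fun x hx => hB x (Ioo_subset_Icc_self (hcS hx))) hxa
  have hlim := tendsto_nhdsGT_zero_of_hasDerivAt_of_le_mul hc0 hz hz'
    ((hu'L2.mono_set hcS).const_mul E)
    (fun x hx => mul_nonneg (mul_nonneg hx.1.le (hη_pos x).le) (sq_nonneg _))
    (fun x hx => by
      rw [mul_assoc]
      exact mul_le_mul_of_nonneg_left
        (mul_le_mul_of_nonneg_right (hηE x (hcS hx)).1 (sq_nonneg _)) hx.1.le)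
  refine squeeze_zero' ?_ ?_ (by simpa using hlim.const_mul E)
  · filter_upwards [Ioo_mem_nhdsGT hc0] with x hx
    exact mul_nonneg hx.1.le (sq_nonneg _)
  · filter_upwards [Ioo_mem_nhdsGT hc0] with x hx
    calc x * u' x ^ 2 ≤ (E * η x) * (x * u' x ^ 2) :=
          le_mul_of_one_le_left (mul_nonneg hx.1.le (sq_nonneg _)) (hηE x (hcS hx)).2
      _ = E * (x * η x * u' x ^ 2) := by ring

/-- if `u ∈ H²_{1/σ}(0,1)` (i.e. `u ∈ H¹_{1/σ}` with
`A u = σ (η u')' ∈ L²_{1/σ}`) and `K₁ ≤ 1`, then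
`lim_{x→0⁺} x (u'(x))² = 0`. -/
theorem statement18 (a b d : ℝ → ℝ) (K₁ K₂ : ℝ)
    (ha_cont : ContinuousOn a (Icc 0 1)) (hb_cont : ContinuousOn b (Icc 0 1))
    (hd_cont : ContinuousOn d (Icc 0 1))
    (ha0 : a 0 = 0) (hd0 : d 0 = 0)
    (ha_pos : ∀ x ∈ Ioc (0:ℝ) 1, 0 < a x)
    (hd_pos : ∀ x ∈ Ioc (0:ℝ) 1, 0 < d x)
    (hba : IntegrableOn (fun x => b x / a x) (Ioo 0 1))
    (hK₁ : K₁ ∈ Ioo (0:ℝ) 2) (hK₂ : K₂ ∈ Ioo (0:ℝ) 2) (hsum : K₁ + K₂ ≤ 2)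
    (hK₁1 : K₁ ≤ 1)
    (hmona : ∃ δ > 0, MonotoneOn (fun x : ℝ => x ^ K₁ / a x) (Ioo (0:ℝ) δ))
    (hmond : ∃ δ > 0, MonotoneOn (fun x : ℝ => x ^ K₂ / d x) (Ioo (0:ℝ) δ))
    (η σ : ℝ → ℝ)
    (hη : ∀ x, η x = Real.exp (∫ s in (1/2:ℝ)..x, b s / a s))
    (hσ : ∀ x, σ x = a x / η x)
    -- `u ∈ H²_{1/σ}(0,1)`, with `(η u')' = w`, so `A u = σ w ∈ L²_{1/σ}`
    (u u' w : ℝ → ℝ)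
    (hu : ∀ x ∈ Ioo (0:ℝ) 1, HasDerivAt u (u' x) x)
    (hu_cont : ContinuousOn u (Icc 0 1)) (hu0 : u 0 = 0) (hu1 : u 1 = 0)
    (hu'L2 : IntegrableOn (fun x => u' x ^ 2) (Ioo 0 1))
    (huL2σ : IntegrableOn (fun x => u x ^ 2 / σ x) (Ioo 0 1))
    (hw : ∀ x ∈ Ioo (0:ℝ) 1, HasDerivAt (fun t => η t * u' t) (w x) x)
    (hAu : IntegrableOn (fun x => (σ x * w x) ^ 2 / σ x) (Ioo 0 1)) :
    Tendsto (fun x : ℝ => x * u' x ^ 2) (nhdsWithin 0 (Ioi 0)) (nhds 0) :=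
  statement18_general a b K₁ ha_cont hb_cont ha_pos hba hK₁1 hmona η σ hη hσ u' w hu'L2 hw hAu
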